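/- arXiv:math/0011084 — 6 statements merged into one kernel-verified Lean document; each statement's English description precedes it below -/
import Mathlib

section
/- The matrix e := ∑_{i,j} √(λ i · λ j) • (E i j ⊗ₖ E i j) is a self-adjoint idempotent: e * e = e and eᴴ = e. (This is the Jones projection for the basic construction ℂ ⊆ (Mₙ(ℂ), tr(D·)) ⊆ Mₙ(ℂ) ⊗ Mₙ(ℂ) of Lemma 1.2.) -/
open Matrix
open scoped Kronecker

/-!
The Jones projection is the rank-one operator `|ξ⟩⟨ξ|` of the vector `ξ = vec (D^{1/2})`, i.e.
`ξ = ∑ i, √(λ i) • (eᵢ ⊗ eᵢ)`, and `‖ξ‖² = tr D = 1`. For any unit vector `ξ`, `|ξ⟩⟨ξ|` is a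
self-adjoint idempotent.
-/

namespace Matrix

variable {ι κ α : Type*}

theorem isStarProjection_vecMulVec_star [Fintype κ] [Semiring α] [StarRing α] {v : κ → α}
    (hv : star v ⬝ᵥ v = 1) : IsStarProjection (vecMulVec v (star v)) where
  isIdempotentElem := by
    rw [IsIdempotentElem, vecMulVec_mul_vecMulVec, hv, one_smul]
  isSelfAdjoint := by
    rw [IsSelfAdjoint, star_eq_conjTranspose, conjTranspose_vecMulVec, star_star]

theorem sum_smul_single_kronecker_single_eq_vecMulVec [Fintype ι] [DecidableEq ι] [Semiring α]
    [StarRing α] (a : ι → α) :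
    ∑ i, ∑ j, (a i * star (a j)) • (single i j (1 : α) ⊗ₖ single i j (1 : α)) =
      vecMulVec (vec (diagonal a)) (star (vec (diagonal a))) := by
  ext ⟨p, q⟩ ⟨r, s⟩
  simp only [sum_apply, smul_apply, single_kronecker_single, single_apply, Prod.mk.injEq,
    vecMulVec_apply, vec, Pi.star_apply, diagonal_apply, smul_eq_mul, mul_one, ite_and, mul_ite,
    mul_zero, Finset.sum_ite_irrel, Finset.sum_ite_eq', Finset.mem_univ, Finset.sum_const_zero]
  split_ifs <;> simp_all

end Matrix

theorem jones_projection_idempotent_selfAdjoint_general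
    (n : ℕ) (lam : Fin n → ℝ)
    (hpos : ∀ i, 0 < lam i) (hsum : ∑ i, lam i = 1)
    (E : Fin n → Fin n → Matrix (Fin n) (Fin n) ℂ)
    (hE : ∀ i j, E i j = Matrix.single i j (1 : ℂ))
    (e : Matrix (Fin n × Fin n) (Fin n × Fin n) ℂ)
    (he : e = ∑ i, ∑ j, ((Real.sqrt (lam i * lam j) : ℝ) : ℂ) • (E i j ⊗ₖ E i j)) :
    e * e = e ∧ eᴴ = e := by
  set ξ := vec (diagonal fun i => (√(lam i) : ℂ))
  have he_eq : e = vecMulVec ξ (star ξ) := by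
    rw [he, ← sum_smul_single_kronecker_single_eq_vecMulVec]
    simp_rw [hE, Real.sqrt_mul (hpos _).le, Complex.ofReal_mul, Complex.star_def,
      Complex.conj_ofReal]
  have hξ : star ξ ⬝ᵥ ξ = 1 := by
    rw [star_vec_dotProduct_vec, diagonal_conjTranspose, diagonal_mul_diagonal, trace_diagonal]
    simp_rw [Pi.star_apply, Complex.star_def, Complex.conj_ofReal, ← Complex.ofReal_mul,
      Real.mul_self_sqrt (hpos _).le]
    exact_mod_cast hsum
  exact he_eq ▸ isStarProjection_iff'.mp (isStarProjection_vecMulVec_star hξ)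

/-- The Jones projection `e = ∑ i j, √(λ i λ j) • (E i j ⊗ₖ E i j)` for the basic
construction `ℂ ⊆ (Mₙ(ℂ), tr(D·)) ⊆ Mₙ(ℂ) ⊗ Mₙ(ℂ)` is a self-adjoint idempotent. -/
theorem jones_projection_idempotent_selfAdjoint
    (n : ℕ) (hn : 1 ≤ n) (lam : Fin n → ℝ)
    (hpos : ∀ i, 0 < lam i) (hsum : ∑ i, lam i = 1)
    (E : Fin n → Fin n → Matrix (Fin n) (Fin n) ℂ)
    (hE : ∀ i j, E i j = Matrix.single i j (1 : ℂ))
    (e : Matrix (Fin n × Fin n) (Fin n × Fin n) ℂ)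
    (he : e = ∑ i, ∑ j, ((Real.sqrt (lam i * lam j) : ℝ) : ℂ) • (E i j ⊗ₖ E i j)) :
    e * e = e ∧ eᴴ = e :=
  jones_projection_idempotent_selfAdjoint_general n lam hpos hsum E hE e he
end

section
/- The Markov state evaluated at the Jones projection equals the inverse of the index: ψ(e) = (∑ i, (λ i)⁻¹)⁻¹, where ψ(x) := trace((D ⊗ₖ D⁻¹) * x) / trace(D⁻¹). (Lemma 1.2: the value of the Markov state on the Jones projection is (∑ 1/λᵢ)⁻¹.) -/
open Matrix
open scoped Kronecker

/-!
Since `E i j ⊗ₖ E i j` is the matrix unit at `((i, i), (j, j))`, pairing it with the diagonal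
matrix `D ⊗ₖ D⁻¹` picks out `δ i j · λ i · (λ i)⁻¹ = δ i j`. Hence
`trace ((D ⊗ₖ D⁻¹) * e) = ∑ i, √(λ i ^ 2) = ∑ i, λ i = 1`, while `trace D⁻¹ = ∑ i, (λ i)⁻¹`.
-/

namespace Matrix

variable {m R : Type*} [Fintype m] [DecidableEq m] [CommSemiring R]

theorem trace_kronecker_mul_sum_smul_single_kronecker_single (A B : Matrix m m R)
    (c : m → m → R) :
    trace ((A ⊗ₖ B) * ∑ i, ∑ j, c i j • (single i j (1 : R) ⊗ₖ single i j (1 : R))) =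
      ∑ i, ∑ j, c i j * (A j i * B j i) := by
  simp only [Finset.mul_sum, Matrix.mul_smul, trace_sum, trace_smul, single_kronecker_single,
    trace_mul_single, kroneckerMap_apply, mul_one, MulOpposite.op_one, one_smul, smul_eq_mul]

theorem trace_diagonal_kronecker_diagonal_mul_sum_smul_single_kronecker_single
    (d d' : m → R) (c : m → m → R) :
    trace ((diagonal d ⊗ₖ diagonal d') *
        ∑ i, ∑ j, c i j • (single i j (1 : R) ⊗ₖ single i j (1 : R))) =
      ∑ i, c i i * (d i * d' i) := by
  rw [trace_kronecker_mul_sum_smul_single_kronecker_single]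
  refine Finset.sum_congr rfl fun i _ => ?_
  rw [Finset.sum_eq_single i]
  · simp only [diagonal_apply_eq]
  · intro j _ hji
    simp only [diagonal_apply_ne _ hji, mul_zero]
  · simp

end Matrix

theorem markov_state_on_jones_projection_general
    (n : ℕ) (lam : Fin n → ℝ)
    (hpos : ∀ i, 0 < lam i) (hsum : ∑ i, lam i = 1)
    (D Dinv : Matrix (Fin n) (Fin n) ℂ)
    (hD : D = Matrix.diagonal (fun i => (lam i : ℂ)))
    (hDinv : Dinv = Matrix.diagonal (fun i => ((lam i)⁻¹ : ℂ)))
    (E : Fin n → Fin n → Matrix (Fin n) (Fin n) ℂ)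
    (hE : ∀ i j, E i j = Matrix.single i j (1 : ℂ))
    (e : Matrix (Fin n × Fin n) (Fin n × Fin n) ℂ)
    (he : e = ∑ i, ∑ j, ((Real.sqrt (lam i * lam j) : ℝ) : ℂ) • (E i j ⊗ₖ E i j))
    (ψ : Matrix (Fin n × Fin n) (Fin n × Fin n) ℂ → ℂ)
    (hψ : ∀ x, ψ x = Matrix.trace ((D ⊗ₖ Dinv) * x) / Matrix.trace Dinv) :
    ψ e = (∑ i, ((lam i)⁻¹ : ℂ))⁻¹ := by
  have hterm : ∀ i, ((Real.sqrt (lam i * lam i) : ℝ) : ℂ) * ((lam i : ℂ) * (lam i : ℂ)⁻¹) =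
      (lam i : ℂ) := by
    intro i
    have hne : (lam i : ℂ) ≠ 0 := Complex.ofReal_ne_zero.mpr (hpos i).ne'
    rw [Real.sqrt_mul_self (hpos i).le, mul_inv_cancel₀ hne, mul_one]
  have htrace : trace ((D ⊗ₖ Dinv) * e) = 1 := by
    simp only [hD, hDinv, he, hE,
      trace_diagonal_kronecker_diagonal_mul_sum_smul_single_kronecker_single, hterm]
    exact_mod_cast hsum
  rw [hψ, htrace, hDinv, trace_diagonal, one_div]

/-- The Markov state `ψ(x) = trace((D ⊗ₖ D⁻¹) * x) / trace(D⁻¹)` evaluated at the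
Jones projection `e` equals `(∑ i, (λ i)⁻¹)⁻¹`, the inverse of the index. -/
theorem markov_state_on_jones_projection
    (n : ℕ) (hn : 1 ≤ n) (lam : Fin n → ℝ)
    (hpos : ∀ i, 0 < lam i) (hsum : ∑ i, lam i = 1)
    (D Dinv : Matrix (Fin n) (Fin n) ℂ)
    (hD : D = Matrix.diagonal (fun i => (lam i : ℂ)))
    (hDinv : Dinv = Matrix.diagonal (fun i => ((lam i)⁻¹ : ℂ)))
    (E : Fin n → Fin n → Matrix (Fin n) (Fin n) ℂ)
    (hE : ∀ i j, E i j = Matrix.single i j (1 : ℂ))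
    (e : Matrix (Fin n × Fin n) (Fin n × Fin n) ℂ)
    (he : e = ∑ i, ∑ j, ((Real.sqrt (lam i * lam j) : ℝ) : ℂ) • (E i j ⊗ₖ E i j))
    (ψ : Matrix (Fin n × Fin n) (Fin n × Fin n) ℂ → ℂ)
    (hψ : ∀ x, ψ x = Matrix.trace ((D ⊗ₖ Dinv) * x) / Matrix.trace Dinv) :
    ψ e = (∑ i, ((lam i)⁻¹ : ℂ))⁻¹ :=
  markov_state_on_jones_projection_general n lam hpos hsum D Dinv hD hDinv E hE e he ψ hψ
end

section
/- The Jones projection implements the state tr(D·) (Markov property): for every x ∈ Mₙ(ℂ), e * (x ⊗ₖ 1) * e = trace(D * x) • e, and likewise e * (1 ⊗ₖ x) * e = trace(D * x) • e, where 1 denotes the n×n identity matrix. -/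
open Matrix
open scoped Kronecker

/-!
With `S := D^{1/2} = diagonal (√λ)`, the Jones projection is the rank-one matrix
`e = ξ ξᵀ` for the vectorisation `ξ = vec S`. Hence `e M e = (ξ ⬝ᵥ M ξ) • e` for every `M`, and
by `(B ⊗ₖ A) vec X = vec (A X Bᵀ)` both `ξ ⬝ᵥ (x ⊗ₖ 1) ξ` and `ξ ⬝ᵥ (1 ⊗ₖ x) ξ` reduce to
`trace (S S x) = trace (D x)`.
-/

namespace Matrix

variable {R ι κ l m n : Type*} [CommSemiring R]

theorem vecMulVec_mul_mul_vecMulVec [Fintype m] [Fintype n]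
    (u : l → R) (v : m → R) (M : Matrix m n R) (w : n → R) (z : κ → R) :
    vecMulVec u v * M * vecMulVec w z = (v ⬝ᵥ M *ᵥ w) • vecMulVec u z := by
  rw [Matrix.mul_assoc, mul_vecMulVec, vecMulVec_mul_vecMulVec, vecMulVec_smul]

section Vec

variable [Fintype m] [Fintype n]

theorem vec_dotProduct_kronecker_one_mulVec_vec [DecidableEq m]
    (A B : Matrix m n R) (X : Matrix n n R) :
    vec A ⬝ᵥ (X ⊗ₖ 1) *ᵥ vec B = trace (Bᵀ * A * X) := by
  rw [kronecker_mulVec_vec, Matrix.one_mul, vec_dotProduct_vec, ← trace_transpose, transpose_mul,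
    transpose_mul, transpose_transpose, transpose_transpose, Matrix.mul_assoc, trace_mul_comm]

theorem vec_dotProduct_one_kronecker_mulVec_vec [DecidableEq n]
    (A B : Matrix m n R) (X : Matrix m m R) :
    vec A ⬝ᵥ (1 ⊗ₖ X) *ᵥ vec B = trace (B * Aᵀ * X) := by
  rw [← vec_mul_eq_mulVec, vec_dotProduct_vec, ← Matrix.mul_assoc, trace_mul_cycle]

end Vec

theorem sum_smul_single_kronecker_single [Fintype ι] [DecidableEq ι] (s : ι → R) :
    ∑ i, ∑ j, (s i * s j) • (single i j (1 : R) ⊗ₖ single i j (1 : R)) =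
      vecMulVec (vec (diagonal s)) (vec (diagonal s)) := by
  ext ⟨a, b⟩ ⟨c, d⟩
  rw [sum_apply, Fintype.sum_eq_single a, sum_apply, Fintype.sum_eq_single c] <;>
    simp +contextual [single_kronecker_single, sum_apply, single_apply, vecMulVec_apply, vec,
      diagonal_apply, eq_comm, ite_and]
  split_ifs <;> rfl

end Matrix

theorem jones_projection_implements_state_general
    (n : ℕ) (lam : Fin n → ℝ)
    (hpos : ∀ i, 0 < lam i)
    (D : Matrix (Fin n) (Fin n) ℂ)
    (hD : D = Matrix.diagonal (fun i => (lam i : ℂ)))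
    (E : Fin n → Fin n → Matrix (Fin n) (Fin n) ℂ)
    (hE : ∀ i j, E i j = Matrix.single i j (1 : ℂ))
    (e : Matrix (Fin n × Fin n) (Fin n × Fin n) ℂ)
    (he : e = ∑ i, ∑ j, ((Real.sqrt (lam i * lam j) : ℝ) : ℂ) • (E i j ⊗ₖ E i j)) :
    ∀ x : Matrix (Fin n) (Fin n) ℂ,
      e * (x ⊗ₖ (1 : Matrix (Fin n) (Fin n) ℂ)) * e = Matrix.trace (D * x) • e ∧
      e * ((1 : Matrix (Fin n) (Fin n) ℂ) ⊗ₖ x) * e = Matrix.trace (D * x) • e := by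
  set S : Matrix (Fin n) (Fin n) ℂ := diagonal fun i => ((√(lam i) : ℝ) : ℂ)
  have hSS : S * S = D := by
    simp_rw [S, hD, diagonal_mul_diagonal, ← Complex.ofReal_mul, Real.mul_self_sqrt (hpos _).le]
  have he_vec : e = vecMulVec (vec S) (vec S) := by
    simp_rw [he, hE, Real.sqrt_mul (hpos _).le, Complex.ofReal_mul, S,
      sum_smul_single_kronecker_single]
  intro x
  rw [he_vec, vecMulVec_mul_mul_vecMulVec, vecMulVec_mul_mul_vecMulVec,
    vec_dotProduct_kronecker_one_mulVec_vec, vec_dotProduct_one_kronecker_mulVec_vec,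
    diagonal_transpose, hSS]
  exact ⟨rfl, rfl⟩

/-- Markov property: the Jones projection implements the state `tr(D·)`:
`e * (x ⊗ₖ 1) * e = trace(D * x) • e` and `e * (1 ⊗ₖ x) * e = trace(D * x) • e`. -/
theorem jones_projection_implements_state
    (n : ℕ) (hn : 1 ≤ n) (lam : Fin n → ℝ)
    (hpos : ∀ i, 0 < lam i) (hsum : ∑ i, lam i = 1)
    (D : Matrix (Fin n) (Fin n) ℂ)
    (hD : D = Matrix.diagonal (fun i => (lam i : ℂ)))
    (E : Fin n → Fin n → Matrix (Fin n) (Fin n) ℂ)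
    (hE : ∀ i j, E i j = Matrix.single i j (1 : ℂ))
    (e : Matrix (Fin n × Fin n) (Fin n × Fin n) ℂ)
    (he : e = ∑ i, ∑ j, ((Real.sqrt (lam i * lam j) : ℝ) : ℂ) • (E i j ⊗ₖ E i j)) :
    ∀ x : Matrix (Fin n) (Fin n) ℂ,
      e * (x ⊗ₖ (1 : Matrix (Fin n) (Fin n) ℂ)) * e = Matrix.trace (D * x) • e ∧
      e * ((1 : Matrix (Fin n) (Fin n) ℂ) ⊗ₖ x) * e = Matrix.trace (D * x) • e :=
  jones_projection_implements_state_general n lam hpos D hD E hE e he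
end

section
/- The state-preserving conditional expectation onto the first tensor factor maps the Jones projection to (∑ i, (λ i)⁻¹)⁻¹ times the identity: the n×n matrix F defined by F i j := (∑ k, ((λ k)⁻¹ : ℂ) * e (i,k) (j,k)) / trace(D⁻¹) equals (∑ i, ((λ i)⁻¹ : ℂ))⁻¹ • (1 : Matrix (Fin n) (Fin n) ℂ). (Lemma 1.2: the Jones projection has expectation equal to (∑ 1/λᵢ)⁻¹ times the scalars.) -/
open Matrix
open scoped Kronecker

/-!
Only the "diagonal" entries `e (i, k) (j, k)` enter the slice map, and these vanish unless
`i = j = k`, where `e (k, k) (k, k) = √(λₖ λₖ) = λₖ`. Weighting by `λₖ⁻¹` therefore slices `e`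
to the identity matrix, and it remains to divide by `trace D⁻¹ = ∑ λᵢ⁻¹`.
-/

namespace Matrix

variable {R n m : Type*} [CommSemiring R] [Fintype n] [DecidableEq n]

/-- The slice map `x ↦ (id ⊗ Tr)(x (1 ⊗ diagonal w))` onto the first tensor factor. -/
def sliceDiagonal [Fintype m] (w : m → R) (x : Matrix (n × m) (n × m) R) : Matrix n n R :=
  of fun i j => ∑ k, w k * x (i, k) (j, k)

theorem sum_smul_single_kronecker_single_apply (c : n → n → R) (a b a' b' : n) :
    (∑ i, ∑ j, c i j • (single i j (1 : R) ⊗ₖ single i j 1)) (a, b) (a', b') =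
      if a = b ∧ a' = b' then c a a' else 0 := by
  simp only [single_kronecker_single, mul_one, sum_apply, smul_apply, single_apply,
    Prod.mk.injEq, smul_eq_mul, mul_ite, mul_one, mul_zero]
  split_ifs with h
  · obtain ⟨rfl, rfl⟩ := h
    simp only [and_self]
    rw [Fintype.sum_eq_single a fun i hi => Finset.sum_eq_zero fun j _ => if_neg fun h => hi h.1,
      Fintype.sum_eq_single a' fun j hj => if_neg fun h => hj h.2, if_pos ⟨rfl, rfl⟩]
  · refine Finset.sum_eq_zero fun i _ => Finset.sum_eq_zero fun j _ => if_neg ?_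
    rintro ⟨⟨rfl, rfl⟩, rfl, rfl⟩
    exact h ⟨rfl, rfl⟩

theorem sliceDiagonal_sum_smul_single_kronecker_single (w : n → R) (c : n → n → R) :
    sliceDiagonal w (∑ i, ∑ j, c i j • (single i j (1 : R) ⊗ₖ single i j 1)) =
      diagonal fun i => w i * c i i := by
  ext i j
  simp only [sliceDiagonal, of_apply, sum_smul_single_kronecker_single_apply, mul_ite, mul_zero,
    diagonal_apply]
  split_ifs with hij
  · subst hij
    simp
  · refine Finset.sum_eq_zero fun k _ => if_neg ?_
    rintro ⟨rfl, rfl⟩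
    exact hij rfl

end Matrix

theorem conditional_expectation_of_jones_projection_general
    (n : ℕ) (lam : Fin n → ℝ)
    (hpos : ∀ i, 0 < lam i)
    (Dinv : Matrix (Fin n) (Fin n) ℂ)
    (hDinv : Dinv = Matrix.diagonal (fun i => ((lam i)⁻¹ : ℂ)))
    (E : Fin n → Fin n → Matrix (Fin n) (Fin n) ℂ)
    (hE : ∀ i j, E i j = Matrix.single i j (1 : ℂ))
    (e : Matrix (Fin n × Fin n) (Fin n × Fin n) ℂ)
    (he : e = ∑ i, ∑ j, ((Real.sqrt (lam i * lam j) : ℝ) : ℂ) • (E i j ⊗ₖ E i j))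
    (F : Matrix (Fin n) (Fin n) ℂ)
    (hF : ∀ i j, F i j = (∑ k, ((lam k)⁻¹ : ℂ) * e (i, k) (j, k)) / Matrix.trace Dinv) :
    F = (∑ i, ((lam i)⁻¹ : ℂ))⁻¹ • (1 : Matrix (Fin n) (Fin n) ℂ) := by
  have hslice : F = (trace Dinv)⁻¹ • sliceDiagonal (fun k => ((lam k)⁻¹ : ℂ)) e := by
    ext i j
    rw [hF, div_eq_inv_mul]
    rfl
  have hdiag : ∀ i, ((lam i)⁻¹ : ℂ) * ((Real.sqrt (lam i * lam i) : ℝ) : ℂ) = 1 := fun i => by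
    rw [Real.sqrt_mul_self (hpos i).le]
    exact inv_mul_cancel₀ (by exact_mod_cast (hpos i).ne')
  simp only [hE] at he
  rw [hslice, he, sliceDiagonal_sum_smul_single_kronecker_single]
  simp only [hdiag, diagonal_one, hDinv, trace_diagonal]

/-- The state-preserving conditional expectation onto the first tensor factor (the slice
map against the normalized second-leg density `D⁻¹ / trace(D⁻¹)`) sends the Jones
projection `e` to `(∑ i, (λ i)⁻¹)⁻¹` times the identity matrix. -/
theorem conditional_expectation_of_jones_projection
    (n : ℕ) (hn : 1 ≤ n) (lam : Fin n → ℝ)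
    (hpos : ∀ i, 0 < lam i) (hsum : ∑ i, lam i = 1)
    (Dinv : Matrix (Fin n) (Fin n) ℂ)
    (hDinv : Dinv = Matrix.diagonal (fun i => ((lam i)⁻¹ : ℂ)))
    (E : Fin n → Fin n → Matrix (Fin n) (Fin n) ℂ)
    (hE : ∀ i j, E i j = Matrix.single i j (1 : ℂ))
    (e : Matrix (Fin n × Fin n) (Fin n × Fin n) ℂ)
    (he : e = ∑ i, ∑ j, ((Real.sqrt (lam i * lam j) : ℝ) : ℂ) • (E i j ⊗ₖ E i j))
    (F : Matrix (Fin n) (Fin n) ℂ)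
    (hF : ∀ i j, F i j = (∑ k, ((lam k)⁻¹ : ℂ) * e (i, k) (j, k)) / Matrix.trace Dinv) :
    F = (∑ i, ((lam i)⁻¹ : ℂ))⁻¹ • (1 : Matrix (Fin n) (Fin n) ℂ) :=
  conditional_expectation_of_jones_projection_general n lam hpos Dinv hDinv E hE e he F hF
end

section
/- The algebra Mₙ(ℂ) ⊗ Mₙ(ℂ) is generated as the basic construction ⟨Mₙ(ℂ) ⊗ 1, e⟩: the complex linear span of the set of matrices {(a ⊗ₖ 1) * e * (b ⊗ₖ 1) : a, b ∈ Mₙ(ℂ)} is all of Matrix (Fin n × Fin n) (Fin n × Fin n) ℂ. -/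
/-!
Compressing `e` by matrix units of the first tensor factor isolates one of its terms:
`(E i p ⊗ 1) e (E q j ⊗ 1) = √(λ p λ q) • (E i j ⊗ E p q)`. Since every weight `√(λ p λ q)` is
nonzero, all matrix units of `Mₙ(ℂ) ⊗ Mₙ(ℂ)` lie in the span.
-/

open Matrix
open scoped Kronecker

namespace Matrix

variable {ι κ R : Type*} [Fintype ι] [Fintype κ] [DecidableEq κ]

theorem kronecker_one_mul_kronecker_mul_kronecker_one [CommSemiring R]
    (A C B : Matrix ι ι R) (D : Matrix κ κ R) :
    (A ⊗ₖ (1 : Matrix κ κ R)) * (C ⊗ₖ D) * (B ⊗ₖ (1 : Matrix κ κ R)) = (A * C * B) ⊗ₖ D := by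
  rw [← mul_kronecker_mul, ← mul_kronecker_mul, one_mul, mul_one]

theorem single_kronecker_one_mul_sum_mul [DecidableEq ι] [CommSemiring R]
    (c : ι → ι → R) (i p q j : ι) :
    (single i p 1 ⊗ₖ (1 : Matrix ι ι R)) *
        (∑ p', ∑ q', c p' q' • (single p' q' (1 : R) ⊗ₖ single p' q' (1 : R))) *
        (single q j 1 ⊗ₖ (1 : Matrix ι ι R)) =
      c p q • single (i, p) (j, q) 1 := by
  simp only [Finset.mul_sum, Finset.sum_mul, mul_smul_comm, smul_mul_assoc,
    kronecker_one_mul_kronecker_mul_kronecker_one, single_mul_mul_single]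
  rw [Fintype.sum_eq_single p fun p' hp' => ?_, Fintype.sum_eq_single q fun q' hq' => ?_]
  · simp [single_kronecker_single]
  · simp [hq']
  · simp [hp']

theorem span_kronecker_one_mul_sum_mul_kronecker_one_eq_top [DecidableEq ι] {K : Type*} [Field K]
    (c : ι → ι → K) (hc : ∀ p q, c p q ≠ 0) :
    Submodule.span K {m | ∃ a b : Matrix ι ι K, m = (a ⊗ₖ (1 : Matrix ι ι K)) *
        (∑ p, ∑ q, c p q • (single p q (1 : K) ⊗ₖ single p q (1 : K))) *
        (b ⊗ₖ (1 : Matrix ι ι K))} = ⊤ := by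
  rw [eq_top_iff, ← (stdBasis K (ι × ι) (ι × ι)).span_eq, Submodule.span_le]
  rintro _ ⟨⟨⟨i, p⟩, ⟨j, q⟩⟩, rfl⟩
  have hsingle : single (i, p) (j, q) (1 : K) = (c p q)⁻¹ • ((single i p 1 ⊗ₖ 1) *
      (∑ p, ∑ q, c p q • (single p q (1 : K) ⊗ₖ single p q (1 : K))) * (single q j 1 ⊗ₖ 1)) := by
    rw [single_kronecker_one_mul_sum_mul, inv_smul_smul₀ (hc p q)]
  rw [stdBasis_eq_single, hsingle]
  exact Submodule.smul_mem _ _ (Submodule.subset_span ⟨_, _, rfl⟩)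

end Matrix

theorem basic_construction_spans_general
    (n : ℕ) (lam : Fin n → ℝ)
    (hpos : ∀ i, 0 < lam i)
    (E : Fin n → Fin n → Matrix (Fin n) (Fin n) ℂ)
    (hE : ∀ i j, E i j = Matrix.single i j (1 : ℂ))
    (e : Matrix (Fin n × Fin n) (Fin n × Fin n) ℂ)
    (he : e = ∑ i, ∑ j, ((Real.sqrt (lam i * lam j) : ℝ) : ℂ) • (E i j ⊗ₖ E i j)) :
    Submodule.span ℂ
        {m : Matrix (Fin n × Fin n) (Fin n × Fin n) ℂ |
          ∃ a b : Matrix (Fin n) (Fin n) ℂ,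
            m = (a ⊗ₖ (1 : Matrix (Fin n) (Fin n) ℂ)) * e *
                  (b ⊗ₖ (1 : Matrix (Fin n) (Fin n) ℂ))} = ⊤ := by
  obtain rfl : E = fun i j => single i j 1 := funext₂ hE
  subst he
  refine span_kronecker_one_mul_sum_mul_kronecker_one_eq_top _ fun p q => ?_
  exact_mod_cast (Real.sqrt_pos.mpr (mul_pos (hpos p) (hpos q))).ne'

/-- The basic construction `⟨Mₙ(ℂ) ⊗ 1, e⟩` is all of `Mₙ(ℂ) ⊗ Mₙ(ℂ)`: the complex
linear span of `{(a ⊗ₖ 1) * e * (b ⊗ₖ 1) : a, b ∈ Mₙ(ℂ)}` is all of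
`Matrix (Fin n × Fin n) (Fin n × Fin n) ℂ`. -/
theorem basic_construction_spans
    (n : ℕ) (hn : 1 ≤ n) (lam : Fin n → ℝ)
    (hpos : ∀ i, 0 < lam i) (hsum : ∑ i, lam i = 1)
    (E : Fin n → Fin n → Matrix (Fin n) (Fin n) ℂ)
    (hE : ∀ i j, E i j = Matrix.single i j (1 : ℂ))
    (e : Matrix (Fin n × Fin n) (Fin n × Fin n) ℂ)
    (he : e = ∑ i, ∑ j, ((Real.sqrt (lam i * lam j) : ℝ) : ℂ) • (E i j ⊗ₖ E i j)) :
    Submodule.span ℂ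
        {m : Matrix (Fin n × Fin n) (Fin n × Fin n) ℂ |
          ∃ a b : Matrix (Fin n) (Fin n) ℂ,
            m = (a ⊗ₖ (1 : Matrix (Fin n) (Fin n) ℂ)) * e *
                  (b ⊗ₖ (1 : Matrix (Fin n) (Fin n) ℂ))} = ⊤ :=
  basic_construction_spans_general n lam hpos E hE e he
end

section
/- The nested (second-level) fixed-point identity obtained by recursive application of relations (eqDe.4) and (eqDe.5): for all r₀, s₀, r₁, s₁, r₂, s₂, r₃, s₃ ∈ Fin N, ∑ α, ∑ β, ∑ γ, ∑ δ, ((λ β)⁻¹ * (λ δ)⁻¹ : ℝ) • (u r₀ α * star (u s₀ β) * u r₁ γ * star (u s₁ δ) * u r₂ δ * star (u s₂ γ) * u r₃ β * star (u s₃ α)) = ((λ s₀)⁻¹ * (λ s₁)⁻¹) • (if r₁ = s₂ ∧ s₁ = r₂ ∧ s₀ = r₃ ∧ r₀ = s₃ then (1 : A) else 0). (This is the next step of the recursion in the proof of Theorem 1.6 showing that all elements of Popa's algebra, which have an open–closing parenthesis structure, are fixed points of the coaction.) -/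
private lemma collapse_aux {A : Type*} [Ring A] [Algebra ℝ A] {N : ℕ}
    (c : Fin N → ℝ) (a b : Fin N → A) (d : ℝ) (P Q : A)
    (h : ∑ j, c j • (a j * b j) = d • (1 : A)) :
    ∑ j, c j • (P * (a j * b j) * Q) = d • (P * Q) := by
  have key : ∑ j, c j • (P * (a j * b j) * Q)
      = P * (∑ j, c j • (a j * b j)) * Q := by
    rw [Finset.mul_sum, Finset.sum_mul]
    exact Finset.sum_congr rfl fun j _ => by
      simp only [mul_smul_comm, smul_mul_assoc]
  rw [key, h]
  simp only [mul_smul_comm, smul_mul_assoc, mul_one]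

/-- The nested (second-level) fixed-point identity obtained by recursive application of
the unitarity relations (eqDe.4) and the twisted unitarity relations (eqDe.5), showing
that elements of Popa's algebra with open–closing parenthesis structure are fixed points
of the coaction. -/
theorem nested_fixed_point_identity
    (A : Type*) [Ring A] [StarRing A] [Algebra ℝ A] [StarModule ℝ A]
    (N : ℕ) (hN : 1 ≤ N) (u : Fin N → Fin N → A)
    (lam : Fin N → ℝ) (hpos : ∀ i, 0 < lam i)
    (h4a : ∀ s t, ∑ j, u s j * star (u t j) = if s = t then (1 : A) else 0)
    (h4b : ∀ s t, ∑ j, star (u j s) * u j t = if s = t then (1 : A) else 0)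
    (h5a : ∀ s t, ∑ j, ((lam j)⁻¹ : ℝ) • (star (u s j) * u t j)
            = ((lam s)⁻¹ : ℝ) • (if s = t then (1 : A) else 0))
    (h5b : ∀ s t, ∑ j, (lam j : ℝ) • (u j s * star (u j t))
            = (lam s : ℝ) • (if s = t then (1 : A) else 0)) :
    ∀ r₀ s₀ r₁ s₁ r₂ s₂ r₃ s₃ : Fin N,
      ∑ α, ∑ β, ∑ γ, ∑ δ, (((lam β)⁻¹ * (lam δ)⁻¹ : ℝ)) •
          (u r₀ α * star (u s₀ β) * u r₁ γ * star (u s₁ δ) *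
            u r₂ δ * star (u s₂ γ) * u r₃ β * star (u s₃ α))
        = (((lam s₀)⁻¹ * (lam s₁)⁻¹ : ℝ)) •
            (if r₁ = s₂ ∧ s₁ = r₂ ∧ s₀ = r₃ ∧ r₀ = s₃ then (1 : A) else 0) := by
  intro r₀ s₀ r₁ s₁ r₂ s₂ r₃ s₃
  have hA : ∀ (k : ℝ) (s t : Fin N),
      ∑ j, (k * (lam j)⁻¹) • (star (u s j) * u t j)
        = (k * (lam s)⁻¹ * (if s = t then (1 : ℝ) else 0)) • (1 : A) := by
    intro k s t
    simp_rw [mul_smul]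
    rw [← Finset.smul_sum, h5a, smul_smul]
    by_cases h : s = t <;> simp [h, mul_smul]
  have hB : ∀ (k : ℝ) (r s : Fin N),
      ∑ j, k • (u r j * star (u s j))
        = (k * (if r = s then (1 : ℝ) else 0)) • (1 : A) := by
    intro k r s
    rw [← Finset.smul_sum, h4a]
    by_cases h : r = s <;> simp [h]
  calc
    ∑ α, ∑ β, ∑ γ, ∑ δ, (((lam β)⁻¹ * (lam δ)⁻¹ : ℝ)) •
          (u r₀ α * star (u s₀ β) * u r₁ γ * star (u s₁ δ) *
            u r₂ δ * star (u s₂ γ) * u r₃ β * star (u s₃ α))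
        = ∑ α, ∑ β, ∑ γ,
            ((lam β)⁻¹ * (lam s₁)⁻¹ * (if s₁ = r₂ then (1 : ℝ) else 0)) •
              ((u r₀ α * star (u s₀ β) * u r₁ γ) *
                (star (u s₂ γ) * (u r₃ β * star (u s₃ α)))) := by
        refine Finset.sum_congr rfl fun α _ => Finset.sum_congr rfl fun β _ =>
          Finset.sum_congr rfl fun γ _ => ?_
        calc ∑ δ, (((lam β)⁻¹ * (lam δ)⁻¹ : ℝ)) •
              (u r₀ α * star (u s₀ β) * u r₁ γ * star (u s₁ δ) *
                u r₂ δ * star (u s₂ γ) * u r₃ β * star (u s₃ α))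
            = ∑ δ, (((lam β)⁻¹ * (lam δ)⁻¹ : ℝ)) •
                ((u r₀ α * star (u s₀ β) * u r₁ γ) *
                  (star (u s₁ δ) * u r₂ δ) *
                  (star (u s₂ γ) * (u r₃ β * star (u s₃ α)))) :=
              Finset.sum_congr rfl fun δ _ => by simp only [mul_assoc]
          _ = _ := collapse_aux _ _ _ _ _ _ (hA ((lam β)⁻¹) s₁ r₂)
    _ = ∑ α, ∑ β,
          ((lam β)⁻¹ * (lam s₁)⁻¹ * (if s₁ = r₂ then (1 : ℝ) else 0) *
              (if r₁ = s₂ then (1 : ℝ) else 0)) •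
            ((u r₀ α * star (u s₀ β)) * (u r₃ β * star (u s₃ α))) := by
        refine Finset.sum_congr rfl fun α _ => Finset.sum_congr rfl fun β _ => ?_
        calc ∑ γ, ((lam β)⁻¹ * (lam s₁)⁻¹ * (if s₁ = r₂ then (1 : ℝ) else 0)) •
              ((u r₀ α * star (u s₀ β) * u r₁ γ) *
                (star (u s₂ γ) * (u r₃ β * star (u s₃ α))))
            = ∑ γ, ((lam β)⁻¹ * (lam s₁)⁻¹ * (if s₁ = r₂ then (1 : ℝ) else 0)) •
                ((u r₀ α * star (u s₀ β)) * (u r₁ γ * star (u s₂ γ)) *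
                  (u r₃ β * star (u s₃ α))) :=
              Finset.sum_congr rfl fun γ _ => by simp only [mul_assoc]
          _ = _ := collapse_aux _ _ _ _ _ _
              (hB ((lam β)⁻¹ * (lam s₁)⁻¹ * (if s₁ = r₂ then (1 : ℝ) else 0)) r₁ s₂)
    _ = ∑ α,
          ((lam s₁)⁻¹ * (if s₁ = r₂ then (1 : ℝ) else 0) *
              (if r₁ = s₂ then (1 : ℝ) else 0) * (lam s₀)⁻¹ *
              (if s₀ = r₃ then (1 : ℝ) else 0)) •
            (u r₀ α * star (u s₃ α)) := by
        refine Finset.sum_congr rfl fun α _ => ?_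
        calc ∑ β, ((lam β)⁻¹ * (lam s₁)⁻¹ * (if s₁ = r₂ then (1 : ℝ) else 0) *
              (if r₁ = s₂ then (1 : ℝ) else 0)) •
                ((u r₀ α * star (u s₀ β)) * (u r₃ β * star (u s₃ α)))
            = ∑ β, (((lam s₁)⁻¹ * (if s₁ = r₂ then (1 : ℝ) else 0) *
                (if r₁ = s₂ then (1 : ℝ) else 0)) * (lam β)⁻¹) •
                ((u r₀ α) * (star (u s₀ β) * u r₃ β) * (star (u s₃ α))) :=
              Finset.sum_congr rfl fun β _ => by
                rw [show ((lam β)⁻¹ * (lam s₁)⁻¹ * (if s₁ = r₂ then (1 : ℝ) else 0) *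
                  (if r₁ = s₂ then (1 : ℝ) else 0)) = (((lam s₁)⁻¹ *
                  (if s₁ = r₂ then (1 : ℝ) else 0) *
                  (if r₁ = s₂ then (1 : ℝ) else 0)) * (lam β)⁻¹) from by ring]
                simp only [mul_assoc]
          _ = _ := collapse_aux _ _ _ _ _ _
              (hA ((lam s₁)⁻¹ * (if s₁ = r₂ then (1 : ℝ) else 0) *
                (if r₁ = s₂ then (1 : ℝ) else 0)) s₀ r₃)
    _ = (((lam s₁)⁻¹ * (if s₁ = r₂ then (1 : ℝ) else 0) *
            (if r₁ = s₂ then (1 : ℝ) else 0) * (lam s₀)⁻¹ *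
            (if s₀ = r₃ then (1 : ℝ) else 0)) *
          (if r₀ = s₃ then (1 : ℝ) else 0)) • (1 : A) := hB _ r₀ s₃
    _ = (((lam s₀)⁻¹ * (lam s₁)⁻¹ : ℝ)) •
            (if r₁ = s₂ ∧ s₁ = r₂ ∧ s₀ = r₃ ∧ r₀ = s₃ then (1 : A) else 0) := by
        by_cases h1 : r₁ = s₂ <;> by_cases h2 : s₁ = r₂ <;>
          by_cases h3 : s₀ = r₃ <;> by_cases h4 : r₀ = s₃ <;>
          simp [h1, h2, h3, h4, mul_comm]
end
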